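/- arXiv:1009.2474 — 2 statements merged into one kernel-verified Lean document; each statement's English description precedes it below -/
import Mathlib

section
/- Let K be a field of characteristic different from 2, let N be a positive integer, and let σ and ω be permutations of {1,…,N}. Then the dimension over K of the kernel of the matrix P_ω + P_σ equals the number of cycles of even length in the disjoint cycle decomposition of the permutation τ = σ∘ω⁻¹ (where fixed points count as cycles of length 1, hence are not counted). -/
/-- The permutation matrix of `μ`: `P_μ[i,j] = 1` if `j = μ i` and `0` otherwise;
thus `(P_μ v) i = v (μ i)`. -/
def permMat (K : Type*) [Field K] {N : ℕ} (μ : Equiv.Perm (Fin N)) :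
    Matrix (Fin N) (Fin N) K :=
  Matrix.of fun i j => if j = μ i then 1 else 0

/-!
Since `P_μ v = v ∘ μ`, we have `(P_ω + P_σ) v = (v ∘ τ + v) ∘ ω`, so the kernel is the space of
`v` with `v ∘ τ = -v`. As `2 ≠ 0`, such a `v` vanishes at the fixed points and on the odd cycles of
`τ`, and on an even cycle it is determined by its value at one point. Conversely, if `r` lies on a
cycle of even length `m`, then `∑_{k<m} (-1)^k δ_r ∘ τ^k` is such a vector, by the identity
`(1 + T) ∑_{k<m} (-T)^k = 1 - T^m`; it equals `1` at `r` and vanishes off the cycle of `r`.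
-/

open Finset LinearMap Equiv Equiv.Perm

theorem eq_zero_of_eq_neg {R : Type*} [Ring R] [NoZeroDivisors R] (h2 : (2 : R) ≠ 0) {a : R}
    (h : a = -a) : a = 0 :=
  (mul_eq_zero.mp (by rw [two_mul]; nth_rw 1 [h]; exact neg_add_cancel a)).resolve_left h2

theorem Module.End.sum_neg_pow_apply_mem_ker_add_one {R M : Type*} [Ring R] [AddCommGroup M]
    [Module R M] (T : Module.End R M) {m : ℕ} (hm : Even m) {u : M} (hu : (T ^ m) u = u) :
    (∑ k ∈ range m, (-T) ^ k) u ∈ ker (T + 1) := by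
  have h : (T + 1) * ∑ k ∈ range m, (-T) ^ k = 1 - T ^ m := by
    rw [← hm.neg_pow, ← mul_neg_geom_sum, sub_neg_eq_add, add_comm]
  rw [mem_ker, ← Module.End.mul_apply, h, LinearMap.sub_apply, hu, Module.End.one_apply, sub_self]

theorem LinearMap.funLeft_pow_apply (R : Type*) {M α : Type*} [Semiring R] [AddCommMonoid M]
    [Module R M] (f : α → α) (k : ℕ) (v : α → M) : (funLeft R M f ^ k) v = v ∘ f^[k] := by
  induction k generalizing v with
  | zero => rfl
  | succ k ih => rw [pow_succ', Module.End.mul_apply, ih, Function.iterate_succ]; rfl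

theorem LinearMap.neg_funLeft_pow_apply {R α : Type*} [Ring R] (f : α → α) (k : ℕ) (u : α → R)
    (y : α) : ((-funLeft R R f) ^ k) u y = (-1) ^ k * u (f^[k] y) := by
  induction k generalizing y with
  | zero => simp
  | succ k ih =>
    rw [pow_succ', Module.End.mul_apply, LinearMap.neg_apply, Pi.neg_apply, funLeft_apply, ih,
      Function.iterate_succ_apply, pow_succ', neg_one_mul, neg_mul]

namespace Equiv.Perm

variable {R : Type*} [Ring R] {α : Type*}

theorem mem_ker_funLeft_add_one_iff (τ : Perm α) {v : α → R} :
    v ∈ ker (funLeft R R τ + 1) ↔ ∀ x, v (τ x) = -v x := by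
  simp [funext_iff, funLeft_apply, add_eq_zero_iff_eq_neg]

theorem apply_pow_of_mem_ker_funLeft_add_one {τ : Perm α} {v : α → R}
    (hv : v ∈ ker (funLeft R R τ + 1)) (k : ℕ) (x : α) : v ((τ ^ k) x) = (-1) ^ k * v x := by
  induction k with
  | zero => simp
  | succ k ih =>
    rw [pow_succ', mul_apply, (mem_ker_funLeft_add_one_iff τ).mp hv, ih, pow_succ, mul_neg_one,
      neg_mul]

variable [Fintype α] [DecidableEq α]

theorem pow_card_support_cycleOf_apply_self (τ : Perm α) (x : α) :
    (τ ^ #(τ.cycleOf x).support) x = x := by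
  rw [← pow_mod_card_support_cycleOf_self_apply, Nat.mod_self, pow_zero, one_apply]

def evenCycleFactors (τ : Perm α) : Finset (Perm α) :=
  τ.cycleFactorsFinset.filter fun c => Even #c.support

theorem card_evenCycleFactors (τ : Perm α) :
    #τ.evenCycleFactors = Multiset.card (τ.cycleType.filter Even) := by
  rw [cycleType_def, Multiset.filter_map, Multiset.card_map]
  rfl

theorem eq_zero_of_mem_ker_funLeft_add_one [NoZeroDivisors R] (h2 : (2 : R) ≠ 0) {τ : Perm α}
    {v : α → R} (hv : v ∈ ker (funLeft R R τ + 1))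
    (hzero : ∀ c ∈ τ.evenCycleFactors, ∃ y ∈ c.support, v y = 0) : v = 0 := by
  funext x
  by_cases hx : τ x = x
  · have := (mem_ker_funLeft_add_one_iff τ).mp hv x
    rw [hx] at this
    exact eq_zero_of_eq_neg h2 this
  set m := #(τ.cycleOf x).support
  by_cases hm : Even m
  · obtain ⟨y, hy, hvy⟩ := hzero (τ.cycleOf x) (mem_filter.mpr
      ⟨cycleOf_mem_cycleFactorsFinset_iff.mpr (mem_support.mpr hx), hm⟩)
    obtain ⟨hxy, hxτ⟩ := mem_support_cycleOf_iff.mp hy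
    obtain ⟨k, -, rfl⟩ := hxy.symm.exists_pow_eq_of_mem_support (hxy.mem_support_iff.mp hxτ)
    rw [apply_pow_of_mem_ker_funLeft_add_one hv, hvy, mul_zero, Pi.zero_apply]
  · have := apply_pow_of_mem_ker_funLeft_add_one hv m x
    rw [pow_card_support_cycleOf_apply_self, (Nat.not_even_iff_odd.mp hm).neg_one_pow,
      neg_one_mul] at this
    exact eq_zero_of_eq_neg h2 this

variable (R) in
def alternatingCycleVector (τ : Perm α) (r : α) : α → R :=
  (∑ k ∈ range #(τ.cycleOf r).support, (-funLeft R R τ) ^ k) (Pi.single r 1)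

theorem alternatingCycleVector_apply (τ : Perm α) (r y : α) :
    alternatingCycleVector R τ r y =
      ∑ k ∈ range #(τ.cycleOf r).support, (-1) ^ k * (Pi.single r 1 : α → R) ((τ ^ k) y) := by
  simp only [alternatingCycleVector, LinearMap.sum_apply, Finset.sum_apply, neg_funLeft_pow_apply,
    coe_pow]

theorem alternatingCycleVector_mem_ker {τ : Perm α} {r : α} (hr : Even #(τ.cycleOf r).support) :
    alternatingCycleVector R τ r ∈ ker (funLeft R R τ + 1) := by
  refine Module.End.sum_neg_pow_apply_mem_ker_add_one _ hr ?_
  have hper := pow_card_support_cycleOf_apply_self τ r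
  generalize #(τ.cycleOf r).support = m at hper ⊢
  funext y
  rw [funLeft_pow_apply, Function.comp_apply, ← coe_pow]
  simp only [Pi.single_apply, (τ ^ m).injective.eq_iff' hper]

theorem alternatingCycleVector_apply_self {τ : Perm α} {r : α} (hr : r ∈ τ.support) :
    alternatingCycleVector R τ r r = 1 := by
  have hr' : r ∈ (τ.cycleOf r).support := mem_support_cycleOf_iff.mpr ⟨.refl τ r, hr⟩
  rw [alternatingCycleVector_apply, sum_eq_single 0]
  · simp [Pi.single_apply]
  · intro k hk hk0
    rw [Pi.single_apply, if_neg, mul_zero]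
    rw [(τ.isCycleOn_support_cycleOf r).pow_apply_eq hr']
    exact fun hdvd => hk0 (Nat.eq_zero_of_dvd_of_lt hdvd (mem_range.mp hk))
  · exact fun h => (h (mem_range.mpr (card_pos.mpr ⟨r, hr'⟩))).elim

theorem alternatingCycleVector_apply_of_not_sameCycle {τ : Perm α} {r y : α}
    (h : ¬ τ.SameCycle y r) : alternatingCycleVector R τ r y = 0 := by
  rw [alternatingCycleVector_apply]
  refine sum_eq_zero fun k _ => ?_
  rw [Pi.single_apply, if_neg, mul_zero]
  exact fun hk => h (sameCycle_pow_left.mp (hk ▸ SameCycle.refl τ r : τ.SameCycle ((τ ^ k) y) r))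

theorem finrank_ker_funLeft_add_one {K : Type*} [Field K] (hK : (2 : K) ≠ 0) (τ : Perm α) :
    Module.finrank K (ker (funLeft K K τ + 1)) = #τ.evenCycleFactors := by
  set V := ker (funLeft K K τ + 1)
  set S := τ.evenCycleFactors
  have hS : ∀ c ∈ S, c ∈ τ.cycleFactorsFinset := fun c hc => (mem_filter.mp hc).1
  choose r hr using fun c : S => (mem_cycleFactorsFinset_iff.mp (hS c c.2)).1.nonempty_support
  have hcycleOf (c : S) : τ.cycleOf (r c) = c := (cycle_is_cycleOf (hr c) (hS c c.2)).symm
  let Φ : V →ₗ[K] S → K := (LinearMap.pi fun c => LinearMap.proj (r c)) ∘ₗ V.subtype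
  have hΦ : Function.Injective Φ := by
    refine (injective_iff_map_eq_zero Φ).mpr fun v hv => Subtype.ext ?_
    refine eq_zero_of_mem_ker_funLeft_add_one hK v.2 fun c hc => ⟨r ⟨c, hc⟩, hr _, ?_⟩
    exact congr_fun hv ⟨c, hc⟩
  let w (c : S) : V := ⟨alternatingCycleVector K τ (r c),
    alternatingCycleVector_mem_ker (by rw [hcycleOf]; exact (mem_filter.mp c.2).2)⟩
  have hΦw : Φ ∘ w = Pi.basisFun K S := by
    funext c c'
    rw [Pi.basisFun_apply]
    change alternatingCycleVector K τ (r c) (r c') = (Pi.single c 1 : S → K) c'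
    by_cases hc : c' = c
    · rw [hc, Pi.single_eq_same]
      exact alternatingCycleVector_apply_self (mem_cycleFactorsFinset_support_le (hS c c.2) (hr c))
    · rw [Pi.single_eq_of_ne hc]
      refine alternatingCycleVector_apply_of_not_sameCycle fun hsame => hc (Subtype.ext ?_)
      rw [← hcycleOf, ← hcycleOf, hsame.cycleOf_eq]
  apply le_antisymm
  · simpa using LinearMap.finrank_le_finrank_of_injective hΦ
  · rw [← Fintype.card_coe]
    exact (LinearIndependent.of_comp Φ
      (hΦw ▸ (Pi.basisFun K S).linearIndependent)).fintype_card_le_finrank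

end Equiv.Perm

theorem permMat_mulVecLin (K : Type*) [Field K] {N : ℕ} (μ : Perm (Fin N)) :
    (permMat K μ).mulVecLin = funLeft K K μ := by
  ext v i
  simp [permMat, Matrix.mulVec, dotProduct, funLeft_apply]

theorem ker_mulVecLin_permMat_add (K : Type*) [Field K] {N : ℕ} (σ ω : Perm (Fin N)) :
    ker (permMat K ω + permMat K σ).mulVecLin = ker (funLeft K K (σ * ω⁻¹) + 1) := by
  have h : (permMat K ω + permMat K σ).mulVecLin =
      funLeft K K ω ∘ₗ (funLeft K K (σ * ω⁻¹) + 1) := by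
    ext v i
    simp [Matrix.mulVecLin_add, permMat_mulVecLin, funLeft_apply, add_comm]
  rw [h, ker_comp_of_ker_eq_bot]
  exact ker_eq_bot.mpr (funLeft_injective_of_surjective _ _ _ ω.surjective)

theorem finrank_kernel_eq_evenCycles_general (K : Type*) [Field K] (hK : (2 : K) ≠ 0)
    (N : ℕ) (σ ω : Equiv.Perm (Fin N)) :
    Module.finrank K (LinearMap.ker (permMat K ω + permMat K σ).mulVecLin) =
      Multiset.card ((σ * ω⁻¹).cycleType.filter (fun l => Even l)) := by
  rw [ker_mulVecLin_permMat_add, finrank_ker_funLeft_add_one hK, card_evenCycleFactors]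

/-- Over a field of characteristic `≠ 2`, the dimension of the kernel of
`P_ω + P_σ` equals the number of cycles of even length in the disjoint cycle
decomposition of `τ = σ ∘ ω⁻¹` (the cycle type records the lengths of all cycles
of length `≥ 2`, so fixed points — cycles of length 1 — are not counted). -/
theorem finrank_kernel_eq_evenCycles (K : Type*) [Field K] (hK : (2 : K) ≠ 0)
    (N : ℕ) (hN : 0 < N) (σ ω : Equiv.Perm (Fin N)) :
    Module.finrank K (LinearMap.ker (permMat K ω + permMat K σ).mulVecLin) =
      Multiset.card ((σ * ω⁻¹).cycleType.filter (fun l => Even l)) :=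
  finrank_kernel_eq_evenCycles_general K hK N σ ω
end

section
/- For every real number s and all nonnegative integers m and n, the mixed partial derivative ∂_x^m ∂_y^n (e^x + e^y − 1)^s evaluated at (x,y) = (0,0) equals Σ_{ℓ=0}^{m} (s)_ℓ · S(m,ℓ) · (s−ℓ)^n, where (s)_ℓ = s(s−1)⋯(s−ℓ+1) is the falling factorial (with (s)_0 = 1) and S(m,ℓ) is the Stirling number of the second kind. -/
/-- Stirling numbers of the second kind: `stirling2 n k` is the number of
partitions of an `n`-element set into `k` nonempty blocks. -/
def stirling2 : ℕ → ℕ → ℕ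
  | 0, 0 => 1
  | 0, _+1 => 0
  | _+1, 0 => 0
  | n+1, k+1 => (k + 1) * stirling2 n (k + 1) + stirling2 n k

/-- The falling factorial `(s)_ℓ = s (s-1) ⋯ (s - ℓ + 1)`, with `(s)_0 = 1`. -/
def fallingFactorial (s : ℝ) (l : ℕ) : ℝ := ∏ i ∈ Finset.range l, (s - i)

/-!
Write `e^x + e^y - 1 = a + e^y` with `a = e^x - 1` and put
`u_k(y) = (s)_k e^{ky} (a + e^y)^{s-k}`. Then `u_k' = k u_k + u_{k+1}`, which is exactly the
recurrence of `S(n+1, k)`, so `∂_y^n u_0 = Σ_k S(n,k) u_k`. At `y = 0` this is the exponential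
sum `Σ_k S(n,k) (s)_k e^{(s-k)x}`, whose `m`-th derivative at `0` is
`Σ_k S(n,k) (s)_k (s-k)^m`. Expanding `(s-k)^m = Σ_l S(m,l) (s-k)_l` and using
`(s)_k (s-k)_l = (s)_{k+l}` turns both this sum and the claimed one into the symmetric double sum
`Σ_{k,l} S(n,k) S(m,l) (s)_{k+l}`.
-/

open Finset Real

lemma stirling2_eq_stirlingSecond : stirling2 = Nat.stirlingSecond := by
  funext n k
  induction n generalizing k with
  | zero => cases k <;> rfl
  | succ n ih => cases k <;> simp [stirling2, Nat.stirlingSecond_succ_succ, ih]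

lemma sum_stirling2_succ_mul (n : ℕ) (u : ℕ → ℝ) :
    ∑ k ∈ range (n + 2), (stirling2 (n + 1) k : ℝ) * u k
      = ∑ k ∈ range (n + 1), (stirling2 n k : ℝ) * (k * u k + u (k + 1)) := by
  rw [stirling2_eq_stirlingSecond]
  have shift := (sum_range_succ' (fun k => (k : ℝ) * n.stirlingSecond k * u k) (n + 1)).symm.trans
    (sum_range_succ _ (n + 1))
  simp only [Nat.stirlingSecond_eq_zero_of_lt (Nat.lt_succ_self n), Nat.cast_add, Nat.cast_one,
    CharP.cast_eq_zero, mul_zero, zero_mul, add_zero] at shift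
  calc ∑ k ∈ range (n + 2), (Nat.stirlingSecond (n + 1) k : ℝ) * u k
      = ∑ k ∈ range (n + 1), ((k : ℝ) + 1) * n.stirlingSecond (k + 1) * u (k + 1)
          + ∑ k ∈ range (n + 1), (n.stirlingSecond k : ℝ) * u (k + 1) := by
        rw [sum_range_succ', ← sum_add_distrib]
        simp only [Nat.stirlingSecond_succ_succ, Nat.stirlingSecond_succ_zero, Nat.cast_add,
          Nat.cast_mul, Nat.cast_one, CharP.cast_eq_zero, zero_mul, add_zero]
        exact sum_congr rfl fun k _ => by ring
    _ = _ := by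
        rw [shift, ← sum_add_distrib]
        exact sum_congr rfl fun k _ => by ring

lemma fallingFactorial_succ (s : ℝ) (l : ℕ) :
    fallingFactorial s (l + 1) = fallingFactorial s l * (s - l) :=
  prod_range_succ _ _

lemma fallingFactorial_mul_fallingFactorial_sub (s : ℝ) (k l : ℕ) :
    fallingFactorial s k * fallingFactorial (s - k) l = fallingFactorial s (k + l) := by
  induction l with
  | zero => simp [fallingFactorial]
  | succ l ih =>
    rw [fallingFactorial_succ, ← mul_assoc, ih, ← add_assoc, fallingFactorial_succ]
    push_cast
    ring

lemma pow_eq_sum_stirling2_mul_fallingFactorial (x : ℝ) (m : ℕ) :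
    x ^ m = ∑ l ∈ range (m + 1), (stirling2 m l : ℝ) * fallingFactorial x l := by
  induction m with
  | zero => simp [stirling2, fallingFactorial]
  | succ m ih =>
    rw [sum_stirling2_succ_mul, pow_succ, ih, sum_mul]
    refine sum_congr rfl fun l _ => ?_
    rw [fallingFactorial_succ]
    ring

lemma fallingFactorial_mul_pow_eq_sum (s : ℝ) (k m : ℕ) :
    fallingFactorial s k * (s - k) ^ m
      = ∑ l ∈ range (m + 1), (stirling2 m l : ℝ) * fallingFactorial s (k + l) := by
  rw [pow_eq_sum_stirling2_mul_fallingFactorial, mul_sum]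
  refine sum_congr rfl fun l _ => ?_
  rw [← fallingFactorial_mul_fallingFactorial_sub]
  ring

lemma sum_stirling2_mul_fallingFactorial_mul_pow_comm (s : ℝ) (m n : ℕ) :
    ∑ k ∈ range (n + 1), (stirling2 n k : ℝ) * fallingFactorial s k * (s - k) ^ m
      = ∑ l ∈ range (m + 1), fallingFactorial s l * (stirling2 m l : ℝ) * (s - l) ^ n := by
  calc _ = ∑ k ∈ range (n + 1), ∑ l ∈ range (m + 1),
          (stirling2 n k : ℝ) * stirling2 m l * fallingFactorial s (k + l) :=
        sum_congr rfl fun k _ => by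
          rw [mul_assoc, fallingFactorial_mul_pow_eq_sum, mul_sum]
          exact sum_congr rfl fun l _ => by ring
    _ = ∑ l ∈ range (m + 1), ∑ k ∈ range (n + 1),
          (stirling2 n k : ℝ) * stirling2 m l * fallingFactorial s (k + l) := sum_comm
    _ = _ :=
        sum_congr rfl fun l _ => by
          rw [mul_right_comm, fallingFactorial_mul_pow_eq_sum, sum_mul]
          exact sum_congr rfl fun k _ => by rw [add_comm l]; ring

lemma iteratedDeriv_eqOn_sum_stirling2 {U : Set ℝ} (hU : IsOpen U) {u : ℕ → ℝ → ℝ}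
    (hu : ∀ k, ∀ y ∈ U, HasDerivAt (u k) (k * u k y + u (k + 1) y) y) (n : ℕ) :
    Set.EqOn (iteratedDeriv n (u 0)) (fun y => ∑ k ∈ range (n + 1), (stirling2 n k : ℝ) * u k y)
      U := by
  induction n with
  | zero => intro y _; simp [stirling2]
  | succ n ih =>
    intro y hy
    have hsum : HasDerivAt (fun y => ∑ k ∈ range (n + 1), (stirling2 n k : ℝ) * u k y)
        (∑ k ∈ range (n + 1), (stirling2 n k : ℝ) * (k * u k y + u (k + 1) y)) y :=
      HasDerivAt.fun_sum fun k _ => (hu k y hy).const_mul _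
    rw [iteratedDeriv_succ, (Filter.eventuallyEq_of_mem (hU.mem_nhds hy) ih).deriv_eq,
      hsum.deriv]
    exact (sum_stirling2_succ_mul n fun k => u k y).symm

lemma hasDerivAt_fallingFactorial_mul_exp_mul_rpow (s a : ℝ) (k : ℕ) {y : ℝ}
    (hy : 0 < a + exp y) :
    HasDerivAt (fun y => fallingFactorial s k * (exp (k * y) * (a + exp y) ^ (s - k)))
      (k * (fallingFactorial s k * (exp (k * y) * (a + exp y) ^ (s - k)))
        + fallingFactorial s (k + 1) * (exp ((k + 1 : ℕ) * y) * (a + exp y) ^ (s - (k + 1 : ℕ))))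
      y := by
  have hexp : HasDerivAt (fun y => exp (k * y)) (exp (k * y) * k) y :=
    ((hasDerivAt_id y).const_mul (k : ℝ)).exp.congr_deriv (by simp)
  have hrpow : HasDerivAt (fun y => (a + exp y) ^ (s - k))
      (exp y * (s - k) * (a + exp y) ^ (s - k - 1)) y :=
    ((hasDerivAt_exp y).const_add a).rpow_const (Or.inl hy.ne')
  refine ((hexp.mul hrpow).const_mul (fallingFactorial s k)).congr_deriv ?_
  rw [fallingFactorial_succ]
  push_cast
  rw [add_mul, one_mul, exp_add, sub_add_eq_sub_sub]
  ring

lemma iteratedDeriv_add_exp_rpow (s a : ℝ) (n : ℕ) {y : ℝ} (hy : 0 < a + exp y) :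
    iteratedDeriv n (fun y => (a + exp y) ^ s) y
      = ∑ k ∈ range (n + 1),
          (stirling2 n k : ℝ) * (fallingFactorial s k * (exp (k * y) * (a + exp y) ^ (s - k))) := by
  have hU : IsOpen {y | 0 < a + exp y} := isOpen_lt continuous_const (by fun_prop)
  have h := iteratedDeriv_eqOn_sum_stirling2 hU
    (fun k _ hy => hasDerivAt_fallingFactorial_mul_exp_mul_rpow s a k hy) n hy
  simpa [fallingFactorial] using h

lemma iteratedDeriv_sum_mul_exp (a b : ℕ → ℝ) (N m : ℕ) (x : ℝ) :
    iteratedDeriv m (fun x => ∑ k ∈ range N, a k * exp (b k * x)) x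
      = ∑ k ∈ range N, a k * b k ^ m * exp (b k * x) := by
  rw [iteratedDeriv_fun_sum fun k _ => by fun_prop]
  simp [mul_assoc]

/-- `∂_x^m ∂_y^n (e^x + e^y - 1)^s` at `(x,y) = (0,0)` equals
`Σ_{ℓ=0}^{m} (s)_ℓ S(m,ℓ) (s-ℓ)^n`, where the power on the left-hand side is
the real power `a ^ b = exp (b * log a)`. -/
theorem mixed_deriv_exp_add_exp_sub_one_rpow (s : ℝ) (m n : ℕ) :
    iteratedDeriv m (fun x : ℝ =>
        iteratedDeriv n (fun y : ℝ => (Real.exp x + Real.exp y - 1) ^ s) 0) 0 =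
      ∑ l ∈ Finset.range (m + 1),
        fallingFactorial s l * (stirling2 m l : ℝ) * (s - l) ^ n := by
  have inner : ∀ x, iteratedDeriv n (fun y => (exp x + exp y - 1) ^ s) 0
      = ∑ k ∈ range (n + 1), ((stirling2 n k : ℝ) * fallingFactorial s k) * exp ((s - k) * x) := by
    intro x
    have hpos : 0 < exp x - 1 + exp 0 := by rw [exp_zero, sub_add_cancel]; exact exp_pos x
    simp_rw [add_sub_right_comm (exp x), iteratedDeriv_add_exp_rpow s _ n hpos, mul_zero,
      exp_zero, sub_add_cancel, one_mul, ← exp_mul, mul_assoc, mul_comm x]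
  rw [funext inner, iteratedDeriv_sum_mul_exp]
  simpa using sum_stirling2_mul_fallingFactorial_mul_pow_comm s m n
end
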